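/- Let x, y, x', y', u, v : List α. Then u and v are conjugate if and only if there exist a constant C : ℕ and an infinite set I ⊆ ℕ such that for every k ∈ I, d_lcs (x ++ u^k ++ y) (x' ++ v^k ++ y') ≤ C. (Proposition on conjugacy for the longest-common-subsequence edit distance.) -/

import Mathlib

/-!
With insertions and deletions of cost 1, `d_lcs s t = |s| + |t| - 2 * lcs s t`. If
`u = p ++ q` and `v = q ++ p`, then `(q ++ p)^k` is a common subsequence of
`x ++ (p ++ q)^(k+1) ++ y` and `x' ++ (q ++ p)^(k+1) ++ y'`, which bounds the distance
independently of `k`.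

Conversely, a distance `≤ C` for infinitely many `k` first forces `|u| = |v|`, and then, for one
large `k`, yields a common subsequence `z` of `u^k` and `v^k` that misses at most `D` letters of
each (`D` depending only on `C` and the fixed words). Such a `z` splits into at most `2D + 1`
pieces that are factors of both `u^k` and `v^k`, so some common factor has length `≥ |u|`; and
every factor of `u^k` of length `|u|` is a rotation of `u`.
-/

/-- `wpow u k` is the k-fold concatenation `u ++ u ++ ⋯ ++ u` (k copies). -/
def wpow {α : Type*} (u : List α) (k : ℕ) : List α := (List.replicate k u).flatten

/-- `Levenshtein.Cost`, `Levenshtein.impl`, `suffixLevenshtein` and `levenshtein`, as in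
Mathlib (`Mathlib/Data/List/EditDistance/Defs.lean`, December 2024), which no longer has them. -/
structure Levenshtein.Cost (α β δ : Type*) where
  delete : α → δ
  insert : β → δ
  substitute : α → β → δ

def Levenshtein.impl {α β δ : Type*} [AddZeroClass δ] [Min δ] (C : Levenshtein.Cost α β δ)
    (xs : List α) (y : β) (d : {r : List δ // 0 < r.length}) :
    {r : List δ // 0 < r.length} :=
  let ⟨ds, w⟩ := d
  xs.zip (ds.zip ds.tail) |>.foldr
    (init := ⟨[C.insert y + ds.getLast (List.length_pos_iff.mp w)], by simp⟩)
    (fun ⟨x, d₀, d₁⟩ ⟨r, w⟩ =>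
      ⟨min (C.delete x + r[0]) (min (C.insert y + d₀) (C.substitute x y + d₁)) :: r, by simp⟩)

def suffixLevenshtein {α β δ : Type*} [AddZeroClass δ] [Min δ] (C : Levenshtein.Cost α β δ)
    (xs : List α) (ys : List β) : {r : List δ // 0 < r.length} :=
  ys.foldr
    (Levenshtein.impl C xs)
    (xs.foldr (init := ⟨[0], by simp⟩) (fun a ⟨r, w⟩ => ⟨(C.delete a + r[0]) :: r, by simp⟩))

def levenshtein {α β δ : Type*} [AddZeroClass δ] [Min δ] (C : Levenshtein.Cost α β δ)
    (xs : List α) (ys : List β) : δ :=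
  let ⟨r, w⟩ := suffixLevenshtein C xs ys
  r[0]

/-- Cost structure for the longest-common-subsequence edit distance: insertions and
deletions cost 1, substituting `a` by `b` costs 0 if `a = b` and 2 otherwise. -/
def lcsCost {α : Type*} [DecidableEq α] : Levenshtein.Cost α α ℕ where
  delete _ := 1
  insert _ := 1
  substitute a b := if a = b then 0 else 2

namespace Levenshtein

variable {α β δ : Type*} [AddZeroClass δ] [Min δ] {C : Cost α β δ}

theorem impl_cons {x : α} {xs : List α} {y : β} {d : δ} {ds : List δ}
    {w : 0 < (d :: ds).length} (w' : 0 < ds.length) :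
    impl C (x :: xs) y ⟨d :: ds, w⟩ =
      let ⟨r, w⟩ := impl C xs y ⟨ds, w'⟩
      ⟨min (C.delete x + r[0]) (min (C.insert y + d) (C.substitute x y + ds[0])) :: r, by simp⟩ :=
  match ds, w' with | _ :: _, _ => rfl

theorem impl_cons_fst_zero {x : α} {xs : List α} {y : β} {d : δ} {ds : List δ}
    {w : 0 < (d :: ds).length} (h : 0 < (impl C (x :: xs) y ⟨d :: ds, w⟩).1.length)
    (w' : 0 < ds.length) :
    (impl C (x :: xs) y ⟨d :: ds, w⟩).1[0]'h =
      let ⟨r, w⟩ := impl C xs y ⟨ds, w'⟩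
      min (C.delete x + r[0]) (min (C.insert y + d) (C.substitute x y + ds[0])) :=
  match ds, w' with | _ :: _, _ => rfl

theorem impl_length {xs : List α} {y : β} (d : {r : List δ // 0 < r.length})
    (w : d.1.length = xs.length + 1) : (impl C xs y d).1.length = xs.length + 1 := by
  induction xs generalizing d with
  | nil => rfl
  | cons x xs ih =>
    match d, w with
    | ⟨_ :: d₂ :: ds, _⟩, w =>
      dsimp [impl]
      congr 1
      exact ih ⟨d₂ :: ds, by simp⟩ (by simpa using w)

end Levenshtein

section Recursion

open Levenshtein

variable {α β δ : Type*} [AddZeroClass δ] [Min δ] (C : Cost α β δ)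

theorem suffixLevenshtein_length (xs : List α) (ys : List β) :
    (suffixLevenshtein C xs ys).1.length = xs.length + 1 := by
  induction ys with
  | nil => induction xs <;> simp_all [suffixLevenshtein]
  | cons y ys ih => exact impl_length _ ih

theorem suffixLevenshtein_cons_left (x : α) (xs : List α) (ys : List β) :
    suffixLevenshtein C (x :: xs) ys =
      ⟨levenshtein C (x :: xs) ys :: (suffixLevenshtein C xs ys).1, by simp⟩ := by
  induction ys with
  | nil => rfl
  | cons y ys ih =>
    have ext_of_head_tail : ∀ {r₁ r₂ : {r : List δ // 0 < r.length}},
        r₁.1[0]'r₁.2 = r₂.1[0]'r₂.2 → r₁.1.tail = r₂.1.tail → r₁ = r₂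
      | ⟨_ :: _, _⟩, ⟨_ :: _, _⟩, h₀, h => by simp_all
    refine ext_of_head_tail rfl ?_
    show (impl C (x :: xs) y (suffixLevenshtein C (x :: xs) ys)).1.tail = _
    rw [ih, impl_cons (by simp [suffixLevenshtein_length])]
    rfl

@[simp] theorem levenshtein_nil_cons (y : β) (ys : List β) :
    levenshtein C ([] : List α) (y :: ys) = C.insert y + levenshtein C [] ys := by
  have key : ∀ d : {r : List δ // 0 < r.length}, d.1.length = 1 →
      (impl C ([] : List α) y d).1[0]'(impl C [] y d).2 = C.insert y + d.1[0]'d.2 := by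
    rintro ⟨l, w⟩ h
    match l, w, h with
    | [_], _, _ => rfl
  exact key _ (suffixLevenshtein_length C [] ys)

@[simp] theorem levenshtein_cons_nil (x : α) (xs : List α) :
    levenshtein C (x :: xs) ([] : List β) = C.delete x + levenshtein C xs [] := rfl

theorem levenshtein_cons_cons (x : α) (xs : List α) (y : β) (ys : List β) :
    levenshtein C (x :: xs) (y :: ys) =
      min (C.delete x + levenshtein C xs (y :: ys))
        (min (C.insert y + levenshtein C (x :: xs) ys)
          (C.substitute x y + levenshtein C xs ys)) := by
  show (impl C (x :: xs) y (suffixLevenshtein C (x :: xs) ys)).1[0]'(impl C _ y _).2 = _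
  simp only [suffixLevenshtein_cons_left]
  rw [impl_cons_fst_zero]
  rfl

end Recursion

section LCS

open List

variable {α : Type*} [DecidableEq α]

@[simp] theorem levenshtein_lcsCost_nil_left (t : List α) :
    levenshtein lcsCost [] t = t.length := by
  induction t with
  | nil => rfl
  | cons b t ih => rw [levenshtein_nil_cons, ih]; exact Nat.add_comm ..

@[simp] theorem levenshtein_lcsCost_nil_right (s : List α) :
    levenshtein lcsCost s [] = s.length := by
  induction s with
  | nil => rfl
  | cons a s ih => rw [levenshtein_cons_nil, ih]; exact Nat.add_comm ..

theorem levenshtein_lcsCost_cons_cons (a b : α) (s t : List α) :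
    levenshtein lcsCost (a :: s) (b :: t) =
      min (1 + levenshtein lcsCost s (b :: t))
        (min (1 + levenshtein lcsCost (a :: s) t)
          ((if a = b then 0 else 2) + levenshtein lcsCost s t)) :=
  levenshtein_cons_cons ..

theorem levenshtein_lcsCost_add_two_mul_length_le {s t w : List α} (hs : w <+ s) (ht : w <+ t) :
    levenshtein lcsCost s t + 2 * w.length ≤ s.length + t.length := by
  induction s generalizing t w with
  | nil => simp [sublist_nil.mp hs]
  | cons a s ihs =>
    induction t generalizing w with
    | nil =>
      rw [sublist_nil.mp ht, levenshtein_lcsCost_nil_right]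
      simp
    | cons b t iht =>
      rw [levenshtein_lcsCost_cons_cons]
      cases hs with
      | cons _ hs =>
        have := ihs hs ht
        simp only [length_cons] at *
        omega
      | cons_cons _ hs =>
        cases ht with
        | cons _ ht =>
          have := iht (hs.cons_cons a) ht
          simp only [length_cons] at *
          omega
        | cons_cons _ ht =>
          have := ihs hs ht
          simp only [length_cons, ↓reduceIte] at *
          omega

theorem exists_sublist_sublist_length_add_length_le_levenshtein_lcsCost (s t : List α) :
    ∃ w, w <+ s ∧ w <+ t ∧ s.length + t.length ≤ levenshtein lcsCost s t + 2 * w.length := by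
  induction s generalizing t with
  | nil => exact ⟨[], .slnil, t.nil_sublist, by simp⟩
  | cons a s ihs =>
    induction t with
    | nil => exact ⟨[], (a :: s).nil_sublist, .slnil, by rw [levenshtein_lcsCost_nil_right]; simp⟩
    | cons b t iht =>
      obtain ⟨w₁, hs₁, ht₁, h₁⟩ := ihs (b :: t)
      obtain ⟨w₂, hs₂, ht₂, h₂⟩ := iht
      obtain ⟨w₃, hs₃, ht₃, h₃⟩ := ihs t
      simp only [levenshtein_lcsCost_cons_cons, length_cons] at *
      rcases min_choice (1 + levenshtein lcsCost s (b :: t))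
          (min (1 + levenshtein lcsCost (a :: s) t)
            ((if a = b then 0 else 2) + levenshtein lcsCost s t)) with h | h
      · exact ⟨w₁, hs₁.cons a, ht₁, by omega⟩
      rcases min_choice (1 + levenshtein lcsCost (a :: s) t)
          ((if a = b then 0 else 2) + levenshtein lcsCost s t) with h' | h'
      · exact ⟨w₂, hs₂, ht₂.cons b, by omega⟩
      by_cases hab : a = b
      · subst hab
        exact ⟨a :: w₃, hs₃.cons_cons a, ht₃.cons_cons a, by simp_all; omega⟩
      · exact ⟨w₃, hs₃.cons a, ht₃.cons b, by simp_all; omega⟩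

end LCS

section Powers

variable {α : Type*}

@[simp] theorem wpow_zero (u : List α) : wpow u 0 = [] := rfl

@[simp] theorem wpow_succ (u : List α) (k : ℕ) : wpow u (k + 1) = u ++ wpow u k := rfl

@[simp] theorem length_wpow (u : List α) (k : ℕ) : (wpow u k).length = k * u.length := by
  induction k with
  | zero => simp
  | succ k ih => simp [ih, Nat.succ_mul, Nat.add_comm]

theorem wpow_append_succ (p q : List α) (k : ℕ) :
    wpow (p ++ q) (k + 1) = p ++ wpow (q ++ p) k ++ q := by
  induction k with
  | zero => simp
  | succ k ih => rw [wpow_succ, ih]; simp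

theorem getElem_wpow (u : List α) (k i : ℕ) (h : i < (wpow u k).length) :
    (wpow u k)[i] = u[i % u.length]'(Nat.mod_lt _ (by
      rw [length_wpow] at h; exact Nat.pos_of_mul_pos_left (Nat.zero_lt_of_lt h))) := by
  induction k generalizing i with
  | zero => simp at h
  | succ k ih =>
    simp only [wpow_succ]
    by_cases hi : i < u.length
    · rw [List.getElem_append_left hi]
      simp [Nat.mod_eq_of_lt hi]
    · rw [List.getElem_append_right (by omega), ih]
      simp [Nat.mod_eq_sub_mod (Nat.le_of_not_lt hi)]

theorem List.IsInfix.isRotated_of_wpow {p u : List α} {k : ℕ} (hp : p <:+: wpow u k)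
    (hlen : p.length = u.length) : p ~r u := by
  obtain ⟨s, t, hst⟩ := hp
  refine List.IsRotated.symm ⟨s.length, List.ext_getElem (by simp [hlen]) fun j hj hjp => ?_⟩
  have := List.getElem_of_eq hst (i := s.length + j) (by simp; omega)
  rw [getElem_wpow, List.getElem_append_left (by simp; omega),
    List.getElem_append_right (by omega)] at this
  simp only [Nat.add_sub_cancel_left] at this
  simp only [List.getElem_rotate, Nat.add_comm j, ← this]

end Powers

section CommonInfix

open List

variable {α : Type*}

/- The second alternative, a first piece that is a common prefix, is what lets a matched leading
letter extend that piece instead of opening a new one. -/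
theorem exists_common_infix_partition {s t z : List α} (hs : z <+ s) (ht : z <+ t) :
    ∃ P : List (List α), P.flatten = z ∧ (∀ p ∈ P, p <:+: s ∧ p <:+: t) ∧
      (P.length + 2 * z.length ≤ s.length + t.length ∨
        ∃ p P', P = p :: P' ∧ p <+: s ∧ p <+: t ∧
          P.length + 2 * z.length ≤ s.length + t.length + 1) := by
  induction s generalizing t z with
  | nil => obtain rfl := sublist_nil.mp hs; exact ⟨[], rfl, by simp, by simp⟩
  | cons a s ihs =>
    induction t generalizing z with
    | nil => obtain rfl := sublist_nil.mp ht; exact ⟨[], rfl, by simp, by simp⟩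
    | cons b t iht =>
      cases hs with
      | cons _ hs =>
        obtain ⟨P, hP, hinf, hlen⟩ := ihs hs ht
        refine ⟨P, hP, fun p hp => ⟨infix_cons (hinf p hp).1, (hinf p hp).2⟩, .inl ?_⟩
        rcases hlen with hlen | ⟨_, _, _, _, _, hlen⟩ <;> simp only [length_cons] at * <;> omega
      | cons_cons _ hs =>
        cases ht with
        | cons _ ht =>
          obtain ⟨P, hP, hinf, hlen⟩ := iht (hs.cons_cons a) ht
          refine ⟨P, hP, fun p hp => ⟨(hinf p hp).1, infix_cons (hinf p hp).2⟩, .inl ?_⟩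
          rcases hlen with hlen | ⟨_, _, _, _, _, hlen⟩ <;> simp only [length_cons] at * <;> omega
        | cons_cons _ ht =>
          obtain ⟨P, rfl, hinf, hlen⟩ := ihs hs ht
          have hinf' : ∀ p ∈ P, p <:+: a :: s ∧ p <:+: a :: t :=
            fun p hp => ⟨infix_cons (hinf p hp).1, infix_cons (hinf p hp).2⟩
          rcases hlen with hlen | ⟨p, P', rfl, hps, hpt, hlen⟩
          · have hs' : [a] <+: a :: s := (prefix_cons_inj a).2 (nil_prefix)
            have ht' : [a] <+: a :: t := (prefix_cons_inj a).2 (nil_prefix)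
            refine ⟨[a] :: P, rfl, forall_mem_cons.2 ⟨⟨hs'.isInfix, ht'.isInfix⟩, hinf'⟩,
              .inr ⟨[a], P, rfl, hs', ht', ?_⟩⟩
            simp only [length_cons] at *
            omega
          · have hs' : a :: p <+: a :: s := (prefix_cons_inj a).2 hps
            have ht' : a :: p <+: a :: t := (prefix_cons_inj a).2 hpt
            refine ⟨(a :: p) :: P', rfl, forall_mem_cons.2 ⟨⟨hs'.isInfix, ht'.isInfix⟩,
              fun q hq => hinf' q (mem_cons_of_mem _ hq)⟩, .inr ⟨a :: p, P', rfl, hs', ht', ?_⟩⟩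
            simp only [length_cons, flatten_cons, length_append] at *
            omega

theorem exists_common_infix_length_le_mul {s t z : List α} (hs : z <+ s) (ht : z <+ t) :
    ∃ p, p <:+: s ∧ p <:+: t ∧ z.length ≤ (s.length + t.length + 1 - 2 * z.length) * p.length := by
  classical
  obtain ⟨P, rfl, hinf, hlen⟩ := exists_common_infix_partition hs ht
  have hP : P.length ≤ s.length + t.length + 1 - 2 * P.flatten.length := by
    rcases hlen with hlen | ⟨_, _, _, _, _, hlen⟩ <;> omega
  by_cases hne : P = []
  · exact ⟨[], nil_infix, nil_infix, by simp [hne]⟩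
  obtain ⟨p, hpP, hmax⟩ := P.toFinset.exists_max_image length (by simpa using hne)
  rw [mem_toFinset] at hpP
  refine ⟨p, (hinf p hpP).1, (hinf p hpP).2, ?_⟩
  calc P.flatten.length = (P.map length).sum := length_flatten
    _ ≤ P.length * p.length := by
      simpa using sum_le_card_nsmul (P.map length) p.length (by simpa using hmax)
    _ ≤ _ := Nat.mul_le_mul_right _ hP

theorem exists_common_infix_of_append_eq_append {a m b a' m' b' : List α}
    (h : a ++ m ++ b = a' ++ m' ++ b') : ∃ z, z <:+: m ∧ z <:+: m' ∧
      (a ++ m ++ b).length ≤ z.length + a.length + b.length + a'.length + b'.length := by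
  wlog hle : a.length ≤ a'.length generalizing a m b a' m' b'
  · obtain ⟨z, hz', hz, hlen⟩ := this h.symm (by omega)
    exact ⟨z, hz, hz', by rw [h]; omega⟩
  obtain ⟨c, rfl⟩ : a <+: a' := prefix_of_prefix_length_le (l₃ := a ++ m ++ b)
    (by simp) (by rw [h]; simp) hle
  simp only [append_assoc, append_cancel_left_eq] at h
  rcases append_eq_append_iff.1 h with ⟨d, rfl, rfl⟩ | ⟨d, rfl, h'⟩
  · exact ⟨[], nil_infix, nil_infix, by simp; omega⟩
  rcases append_eq_append_iff.1 h' with ⟨e, rfl, rfl⟩ | ⟨e, rfl, rfl⟩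
  · exact ⟨m', infix_append c m' e |>.trans (by simp), infix_refl m', by simp; omega⟩
  · exact ⟨d, (suffix_append c d).isInfix, (prefix_append d e).isInfix, by simp; omega⟩

theorem isRotated_of_sublist_wpow {u v z : List α} {k D : ℕ} (hu : z <+ wpow u k)
    (hv : z <+ wpow v k) (hlen : u.length = v.length) (hz : k * u.length ≤ z.length + D)
    (hk : 3 * D + 2 ≤ k) : u ~r v := by
  obtain ⟨p, hpu, hpv, hp⟩ := exists_common_infix_length_le_mul hu hv
  have hn : u.length ≤ p.length := by
    have hcount : (wpow u k).length + (wpow v k).length + 1 - 2 * z.length ≤ 2 * D + 1 := by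
      simp only [length_wpow, ← hlen]; omega
    have := hp.trans (Nat.mul_le_mul_right p.length hcount)
    by_contra! hpn
    nlinarith
  have hq := (take_prefix u.length p).isInfix
  exact ((hq.trans hpu).isRotated_of_wpow (by simp [hn])).symm.trans
    ((hq.trans hpv).isRotated_of_wpow (by simp [hn, ← hlen]))

end CommonInfix

section Conjugacy

open List

variable {α : Type*} [DecidableEq α]

theorem levenshtein_lcsCost_wpow_append_le (x y x' y' p q : List α) (k : ℕ) :
    levenshtein lcsCost (x ++ wpow (p ++ q) (k + 1) ++ y) (x' ++ wpow (q ++ p) (k + 1) ++ y') ≤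
      x.length + y.length + x'.length + y'.length + 2 * (p.length + q.length) := by
  have hs : wpow (q ++ p) k <+ x ++ wpow (p ++ q) (k + 1) ++ y := by
    rw [wpow_append_succ]
    exact (infix_append p _ q).sublist.trans (by simp)
  have ht : wpow (q ++ p) k <+ x' ++ wpow (q ++ p) (k + 1) ++ y' := by
    rw [wpow_succ]
    exact (suffix_append (q ++ p) _).sublist.trans (by simp)
  have := levenshtein_lcsCost_add_two_mul_length_le hs ht
  simp only [length_append, length_wpow, add_mul, mul_add, one_mul] at this ⊢
  omega

theorem levenshtein_lcsCost_wpow_le_of_isRotated {u v : List α} (h : u ~r v)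
    (x y x' y' : List α) (k : ℕ) :
    levenshtein lcsCost (x ++ wpow u (k + 1) ++ y) (x' ++ wpow v (k + 1) ++ y') ≤
      x.length + y.length + x'.length + y'.length + 2 * u.length := by
  obtain ⟨n, hn, rfl⟩ := isRotated_iff_mod.1 h
  have := levenshtein_lcsCost_wpow_append_le x y x' y' (u.take n) (u.drop n) k
  have hlen : (u.take n).length + (u.drop n).length = u.length := by
    rw [← length_append, take_append_drop]
  rwa [take_append_drop, hlen, ← rotate_eq_drop_append_take hn] at this

theorem length_eq_of_levenshtein_lcsCost_wpow_le {x y x' y' u v : List α} {C : ℕ} {I : Set ℕ}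
    (hI : I.Infinite)
    (h : ∀ k ∈ I, levenshtein lcsCost (x ++ wpow u k ++ y) (x' ++ wpow v k ++ y') ≤ C) :
    u.length = v.length := by
  obtain ⟨k, hkI, hk⟩ := hI.exists_gt (C + x.length + y.length + x'.length + y'.length)
  obtain ⟨w, hs, ht, hw⟩ := exists_sublist_sublist_length_add_length_le_levenshtein_lcsCost
    (x ++ wpow u k ++ y) (x' ++ wpow v k ++ y')
  have hs := hs.length_le
  have ht := ht.length_le
  have hC := h k hkI
  simp only [length_append, length_wpow] at hs ht hw
  rcases lt_trichotomy u.length v.length with huv | huv | huv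
  · have := Nat.mul_le_mul_left k huv
    rw [Nat.mul_succ] at this
    omega
  · exact huv
  · have := Nat.mul_le_mul_left k huv
    rw [Nat.mul_succ] at this
    omega

theorem isRotated_of_levenshtein_lcsCost_wpow_le {x y x' y' u v : List α} {k C : ℕ}
    (hlen : u.length = v.length)
    (hk : 3 * (C + x.length + y.length + x'.length + y'.length) + 2 ≤ k)
    (h : levenshtein lcsCost (x ++ wpow u k ++ y) (x' ++ wpow v k ++ y') ≤ C) : u ~r v := by
  obtain ⟨w, hs, ht, hw⟩ := exists_sublist_sublist_length_add_length_le_levenshtein_lcsCost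
    (x ++ wpow u k ++ y) (x' ++ wpow v k ++ y')
  obtain ⟨w₁, b, rfl, hw₁, hb⟩ := sublist_append_iff.1 hs
  obtain ⟨a, m, rfl, ha, hm⟩ := sublist_append_iff.1 hw₁
  obtain ⟨w₂, b', hw', hw₂, hb'⟩ := sublist_append_iff.1 ht
  obtain ⟨a', m', rfl, ha', hm'⟩ := sublist_append_iff.1 hw₂
  obtain ⟨z, hzm, hzm', hz⟩ := exists_common_infix_of_append_eq_append hw'
  refine isRotated_of_sublist_wpow (hzm.sublist.trans hm) (hzm'.sublist.trans hm') hlen ?_ hk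
  have := ha.length_le; have := hb.length_le; have := ha'.length_le; have := hb'.length_le
  simp only [length_append, length_wpow, ← hlen] at hw hz ⊢
  omega

end Conjugacy

theorem stmt_4 {α : Type*} [DecidableEq α] (x y x' y' u v : List α) :
    List.IsRotated u v ↔
      ∃ (C : ℕ) (I : Set ℕ), I.Infinite ∧ ∀ k ∈ I,
        levenshtein lcsCost (x ++ wpow u k ++ y) (x' ++ wpow v k ++ y') ≤ C := by
  constructor
  · intro h
    refine ⟨x.length + y.length + x'.length + y'.length + 2 * u.length, Set.Ici 1,
      Set.Ici_infinite 1, fun k hk => ?_⟩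
    obtain ⟨k, rfl⟩ := Nat.exists_eq_add_of_le' hk
    exact levenshtein_lcsCost_wpow_le_of_isRotated h x y x' y' k
  · rintro ⟨C, I, hI, h⟩
    obtain ⟨k, hkI, hk⟩ := hI.exists_gt (3 * (C + x.length + y.length + x'.length + y'.length) + 1)
    exact isRotated_of_levenshtein_lcsCost_wpow_le (length_eq_of_levenshtein_lcsCost_wpow_le hI h)
      hk (h k hkI)
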